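/- arXiv:2509.23656 — 2 statements merged into one kernel-verified Lean document; each statement's English description precedes it below -/
import Mathlib

section
/- Let three 4×4 matrices Y_l = y_l y_lᵀ (l = 1,2,3) be rank-one outer products with y_l = (s₁√a_l, s₂√b_l, s₃√c_l, s₄√d_l)ᵀ, signs s_k ∈ {−1,+1}, and nonnegative a_l, b_l, c_l, d_l. Suppose: (i) c_l + d_l = 1 for all l; (ii) c₁ = c₂ = c₃ =: τ; (iii) ∑_l a_l = τ and ∑_l b_l = 1 − τ; (iv) s₁s₂ ∑_l √(a_l b_l) = s₃s₄ √(c₁ d₁). Then the vector w ∈ ℝ³ with components w_l = Y_l(1,3) + Y_l(2,4) = s₁s₃√(a_l c_l) + s₂s₄√(b_l d_l) satisfies ‖w‖² = 1. -/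
theorem unit_norm_recovery_from_rank_one_factors
    (a b c d : Fin 3 → ℝ) (s₁ s₂ s₃ s₄ : ℝ)
    (hs₁ : s₁ = 1 ∨ s₁ = -1) (hs₂ : s₂ = 1 ∨ s₂ = -1)
    (hs₃ : s₃ = 1 ∨ s₃ = -1) (hs₄ : s₄ = 1 ∨ s₄ = -1)
    (ha : ∀ l, 0 ≤ a l) (hb : ∀ l, 0 ≤ b l)
    (hc : ∀ l, 0 ≤ c l) (hd : ∀ l, 0 ≤ d l)
    (τ : ℝ)
    (hcd : ∀ l, c l + d l = 1) (hctau : ∀ l, c l = τ)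
    (hsa : ∑ l, a l = τ) (hsb : ∑ l, b l = 1 - τ)
    (hlink : s₁ * s₂ * ∑ l, Real.sqrt (a l * b l)
      = s₃ * s₄ * Real.sqrt (c 0 * d 0)) :
    ∑ l, (s₁ * s₃ * Real.sqrt (a l * c l) + s₂ * s₄ * Real.sqrt (b l * d l)) ^ 2 = 1 := by
  have hτ : 0 ≤ τ := (hctau 0) ▸ hc 0
  have hdl : ∀ l, d l = 1 - τ := fun l => by have h1 := hcd l; have h2 := hctau l; linarith
  have hτ1 : 0 ≤ 1 - τ := (hdl 0) ▸ hd 0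
  have hs1 : s₁ ^ 2 = 1 := by rcases hs₁ with h | h <;> simp [h]
  have hs2 : s₂ ^ 2 = 1 := by rcases hs₂ with h | h <;> simp [h]
  have hs3 : s₃ ^ 2 = 1 := by rcases hs₃ with h | h <;> simp [h]
  have hs4 : s₄ ^ 2 = 1 := by rcases hs₄ with h | h <;> simp [h]
  have key : ∀ l, (s₁ * s₃ * Real.sqrt (a l * c l) + s₂ * s₄ * Real.sqrt (b l * d l)) ^ 2
      = a l * τ + b l * (1 - τ)
        + 2 * (s₁ * s₂ * s₃ * s₄) * Real.sqrt (a l * b l) * Real.sqrt (τ * (1 - τ)) := by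
    intro l
    have h1 : Real.sqrt (a l * c l) ^ 2 = a l * τ := by
      rw [Real.sq_sqrt (mul_nonneg (ha l) (hc l)), hctau l]
    have h2 : Real.sqrt (b l * d l) ^ 2 = b l * (1 - τ) := by
      rw [Real.sq_sqrt (mul_nonneg (hb l) (hd l)), hdl l]
    have h3 : Real.sqrt (a l * c l) * Real.sqrt (b l * d l)
        = Real.sqrt (a l * b l) * Real.sqrt (τ * (1 - τ)) := by
      rw [← Real.sqrt_mul (mul_nonneg (ha l) (hc l)), ← Real.sqrt_mul (mul_nonneg (ha l) (hb l)),
        hctau l, hdl l]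
      ring_nf
    have expand : (s₁ * s₃ * Real.sqrt (a l * c l) + s₂ * s₄ * Real.sqrt (b l * d l)) ^ 2
        = s₁ ^ 2 * s₃ ^ 2 * Real.sqrt (a l * c l) ^ 2
          + s₂ ^ 2 * s₄ ^ 2 * Real.sqrt (b l * d l) ^ 2
          + 2 * (s₁ * s₂ * s₃ * s₄) * (Real.sqrt (a l * c l) * Real.sqrt (b l * d l)) := by ring
    rw [expand, hs1, hs2, hs3, hs4, h1, h2, h3]; ring
  simp only [key]
  rw [Finset.sum_add_distrib, Finset.sum_add_distrib, ← Finset.sum_mul, ← Finset.sum_mul, hsa,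
    ← Finset.sum_mul, ← Finset.mul_sum]
  have hc0 : Real.sqrt (c 0 * d 0) = Real.sqrt (τ * (1 - τ)) := by rw [hctau 0, hdl 0]
  rw [hc0] at hlink
  have hsq : Real.sqrt (τ * (1 - τ)) ^ 2 = τ * (1 - τ) :=
    Real.sq_sqrt (mul_nonneg hτ hτ1)
  have hS := hsb
  linear_combination (1 - τ) * hS + 2 * s₃ * s₄ * Real.sqrt (τ * (1 - τ)) * hlink
    + 2 * s₄ ^ 2 * Real.sqrt (τ * (1 - τ)) ^ 2 * hs3
    + 2 * Real.sqrt (τ * (1 - τ)) ^ 2 * hs4 + 2 * hsq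
end

section
/- Under the hypotheses of the previous setup, additionally assuming the off-diagonal equality Y_l(1,4) = Y_l(2,3) (i.e., s₁s₄√(a_l d_l) = s₂s₃√(b_l c_l)) for all l, that s₃ = s₄, and c_l + d_l = 1, it holds for each l that Y_l(1,3) = c_l · (Y_l(1,3) + Y_l(2,4)), i.e., s₁s₃√(a_l c_l) = c_l (s₁s₃√(a_l c_l) + s₂s₄√(b_l d_l)). Equivalently, the vector g_{τv} with components Y_l(1,3) equals τ · v where τ = c₁ and v has components Y_l(1,3) + Y_l(2,4). -/
theorem bilinear_product_recovery_from_rank_one_factors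
    (a b c d : ℝ) (s₁ s₂ s₃ s₄ : ℝ)
    (hs₁ : s₁ = 1 ∨ s₁ = -1) (hs₂ : s₂ = 1 ∨ s₂ = -1)
    (hs₃ : s₃ = 1 ∨ s₃ = -1) (hs₄ : s₄ = 1 ∨ s₄ = -1)
    (ha : 0 ≤ a) (hb : 0 ≤ b) (hc : 0 ≤ c) (hd : 0 ≤ d)
    (hoff : s₁ * s₄ * Real.sqrt (a * d) = s₂ * s₃ * Real.sqrt (b * c))
    (hs34 : s₃ = s₄) (hcd : c + d = 1) :
    s₁ * s₃ * Real.sqrt (a * c)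
      = c * (s₁ * s₃ * Real.sqrt (a * c) + s₂ * s₄ * Real.sqrt (b * d)) := by
  subst hs34
  have h1 : Real.sqrt (a*d) * Real.sqrt (c*d) = Real.sqrt (a*c) * d := by
    rw [← Real.sqrt_mul (by positivity), show a*d*(c*d) = (a*c)*d^2 by ring,
        Real.sqrt_mul (by positivity), Real.sqrt_sq hd]
  have h2 : Real.sqrt (b*c) * Real.sqrt (c*d) = Real.sqrt (b*d) * c := by
    rw [← Real.sqrt_mul (by positivity), show b*c*(c*d) = (b*d)*c^2 by ring,
        Real.sqrt_mul (by positivity), Real.sqrt_sq hc]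
  have key : s₁ * s₃ * (Real.sqrt (a*c) * d) = s₂ * s₃ * (Real.sqrt (b*d) * c) := by
    rw [← h1, ← h2]
    linear_combination Real.sqrt (c*d) * hoff
  linear_combination key - s₁ * s₃ * Real.sqrt (a*c) * hcd
end
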